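/- arXiv:1402.3251 — 7 statements merged into one kernel-verified Lean document; each statement's English description precedes it below -/
import Mathlib

section
/- (First Griffiths inequality, used in the proof of the monotonicity proposition.) Let G be a finite simple graph with vertex set V and edge set E, let β ≥ 0, and let a, b ∈ V. Then Σ_{σ : V → {−1,+1}} σ(a)σ(b) · exp(β · Σ_{{i,j} ∈ E} σ(i)σ(j)) ≥ 0. -/
open Finset

/-- The spin value associated to a Boolean: `true ↦ +1`, `false ↦ -1`. -/
noncomputable def spin (b : Bool) : ℝ := if b then 1 else -1

/-- The Ising interaction energy `Σ_{{i,j} ∈ E} σ(i)σ(j)` of a spin configuration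
`σ : V → {±1}` (encoded via `Bool`) on a finite simple graph `G`. -/
noncomputable def isingEnergy {V : Type*} [Fintype V] [DecidableEq V]
    (G : SimpleGraph V) [DecidableRel G.Adj] (σ : V → Bool) : ℝ :=
  ∑ e ∈ G.edgeFinset,
    Sym2.lift ⟨fun i j => spin (σ i) * spin (σ j), fun i j => by ring⟩ e

/-- The Ising partition function `Z_G(β) = Σ_σ exp(β Σ_{{i,j} ∈ E} σ(i)σ(j))`. -/
noncomputable def isingZ {V : Type*} [Fintype V] [DecidableEq V]
    (G : SimpleGraph V) [DecidableRel G.Adj] (β : ℝ) : ℝ :=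
  ∑ σ : V → Bool, Real.exp (β * isingEnergy G σ)

/-- The unordered pair `{i, j}` of an element of `Sym2 V`, as a multiset. -/
def sym2Mul {V : Type*} : Sym2 V → Multiset V :=
  Sym2.lift ⟨fun i j => {i, j}, fun i j => Multiset.pair_comm i j⟩

/-- The edge weight `σ(i)σ(j)` associated to an edge. -/
noncomputable def edgeW {V : Type*} (σ : V → Bool) : Sym2 V → ℝ :=
  Sym2.lift ⟨fun i j => spin (σ i) * spin (σ j), fun i j => by ring⟩

lemma edgeW_eq_prod {V : Type*} (σ : V → Bool) (e : Sym2 V) :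
    edgeW σ e = ((sym2Mul e).map fun v => spin (σ v)).prod := by
  induction e using Sym2.ind with
  | _ i j => simp [edgeW, sym2Mul]

lemma spin_eq_or (b : Bool) : spin b = 1 ∨ spin b = -1 := by
  cases b <;> simp [spin]

lemma edgeW_eq_or {V : Type*} (σ : V → Bool) (e : Sym2 V) :
    edgeW σ e = 1 ∨ edgeW σ e = -1 := by
  induction e using Sym2.ind with
  | _ i j =>
    rcases spin_eq_or (σ i) with h1 | h1 <;> rcases spin_eq_or (σ j) with h2 | h2 <;>
      simp [edgeW, h1, h2]

/-- The key combinatorial fact: the sum over all spin configurations of the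
product of spins over any multiset of vertices is nonnegative. -/
lemma multiset_spin_sum_nonneg {V : Type*} [Fintype V] [DecidableEq V] (M : Multiset V) :
    0 ≤ ∑ σ : V → Bool, ((M.map fun v => spin (σ v)).prod) := by
  have h1 : ∀ σ : V → Bool,
      ((M.map fun v => spin (σ v)).prod) = ∏ v : V, spin (σ v) ^ M.count v := by
    intro σ
    rw [Finset.prod_multiset_map_count (M := ℝ) M (fun v => spin (σ v))]
    refine Finset.prod_subset (Finset.subset_univ _) ?_
    intro v _ hv
    rw [Multiset.count_eq_zero_of_notMem (by simpa using hv), pow_zero]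
  calc (0:ℝ) ≤ ∏ v : V, ∑ b : Bool, spin b ^ M.count v := by
        refine Finset.prod_nonneg fun v _ => ?_
        have : ∑ b : Bool, spin b ^ M.count v = (-1:ℝ) ^ M.count v + 1 := by
          simp [spin, add_comm]
        rw [this]
        rcases neg_one_pow_eq_or ℝ (M.count v) with h | h <;> rw [h] <;> norm_num
    _ = ∑ σ ∈ Fintype.piFinset (fun _ : V => (Finset.univ : Finset Bool)),
          ∏ v : V, spin (σ v) ^ M.count v := Finset.prod_univ_sum _ _
    _ = ∑ σ : V → Bool, ((M.map fun v => spin (σ v)).prod) := by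
        rw [Fintype.piFinset_univ]
        exact Finset.sum_congr rfl fun σ _ => (h1 σ).symm

/-- First Griffiths inequality: for `β ≥ 0` and vertices `a, b`,
`Σ_σ σ(a)σ(b) exp(β Σ_{{i,j} ∈ E} σ(i)σ(j)) ≥ 0`. -/
theorem griffiths_first {V : Type*} [Fintype V] [DecidableEq V]
    (G : SimpleGraph V) [DecidableRel G.Adj] (β : ℝ) (hβ : 0 ≤ β) (a b : V) :
    0 ≤ ∑ σ : V → Bool, spin (σ a) * spin (σ b) * Real.exp (β * isingEnergy G σ) := by
  have hexp : ∀ σ : V → Bool, Real.exp (β * isingEnergy G σ)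
      = ∏ e ∈ G.edgeFinset, (Real.sinh β * edgeW σ e + Real.cosh β) := by
    intro σ
    have : β * isingEnergy G σ = ∑ e ∈ G.edgeFinset, β * edgeW σ e := by
      rw [isingEnergy, Finset.mul_sum]; rfl
    rw [this, Real.exp_sum]
    refine Finset.prod_congr rfl fun e _ => ?_
    rcases edgeW_eq_or σ e with h | h <;> rw [h]
    · rw [mul_one, mul_one, add_comm, Real.cosh_add_sinh]
    · rw [mul_neg_one, mul_neg_one, ← sub_eq_neg_add, Real.cosh_sub_sinh]
  -- expand the product over edges into a sum over subsets
  have hprod : ∀ σ : V → Bool,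
      ∏ e ∈ G.edgeFinset, (Real.sinh β * edgeW σ e + Real.cosh β)
      = ∑ S ∈ G.edgeFinset.powerset,
          (Real.sinh β ^ S.card * Real.cosh β ^ (G.edgeFinset \ S).card) *
            ∏ e ∈ S, edgeW σ e := by
    intro σ
    rw [Finset.prod_add]
    refine Finset.sum_congr rfl fun S _ => ?_
    rw [Finset.prod_mul_distrib, Finset.prod_const, Finset.prod_const]
    ring
  calc (0:ℝ) ≤ ∑ S ∈ G.edgeFinset.powerset,
        (Real.sinh β ^ S.card * Real.cosh β ^ (G.edgeFinset \ S).card) *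
          ∑ σ : V → Bool, spin (σ a) * spin (σ b) * ∏ e ∈ S, edgeW σ e := by
        refine Finset.sum_nonneg fun S _ => mul_nonneg
          (mul_nonneg (pow_nonneg (Real.sinh_nonneg_iff.mpr hβ) _)
            (pow_nonneg (le_of_lt (Real.cosh_pos β)) _)) ?_
        have key : ∀ σ : V → Bool,
            spin (σ a) * spin (σ b) * ∏ e ∈ S, edgeW σ e
            = (((a ::ₘ b ::ₘ S.val.bind sym2Mul).map fun v => spin (σ v)).prod) := by
          intro σ
          rw [Multiset.map_cons, Multiset.map_cons, Multiset.prod_cons, Multiset.prod_cons,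
            Multiset.map_bind, Multiset.prod_bind]
          have : ∏ e ∈ S, edgeW σ e
              = (S.val.map fun e => ((sym2Mul e).map fun v => spin (σ v)).prod).prod := by
            rw [Finset.prod_eq_multiset_prod]
            congr 1
            exact Multiset.map_congr rfl fun e _ => edgeW_eq_prod σ e
          rw [this, mul_assoc]
        rw [Finset.sum_congr rfl fun σ _ => key σ]
        exact multiset_spin_sum_nonneg _
    _ = ∑ σ : V → Bool, spin (σ a) * spin (σ b) * Real.exp (β * isingEnergy G σ) := by
        simp_rw [hexp, hprod, Finset.mul_sum]
        rw [Finset.sum_comm]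
        refine Finset.sum_congr rfl fun S _ => Finset.sum_congr rfl fun σ _ => by ring
end

section
/- (Discrete Fortuin–Kasteleyn representation of the Ising partition function.) Let G be a finite simple graph with vertex set V and edge set E and let β ∈ ℝ. Then Z_G(β) = e^{−β|E|} · Σ_{ω ⊆ E} (e^{2β} − 1)^{|ω|} · 2^{c(ω)}. -/
open Finset

/-- The number of connected components of the spanning subgraph `(V, ω)` determined
by a set of edges `ω` (isolated vertices count as components). -/
noncomputable def numComponents {V : Type*} [Fintype V] (ω : Finset (Sym2 V)) : ℕ :=
  Nat.card (SimpleGraph.fromEdgeSet (↑ω : Set (Sym2 V))).ConnectedComponent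

section FKaux

set_option linter.unusedSectionVars false
variable {V : Type*} [Fintype V] [DecidableEq V]

/-- `σ` takes the same value on all members of the edge `e`. -/
def AgreeOn (σ : V → Bool) (e : Sym2 V) : Prop := ∀ v ∈ e, ∀ w ∈ e, σ v = σ w

lemma agreeOn_mk (σ : V → Bool) (i j : V) : AgreeOn σ s(i, j) ↔ σ i = σ j := by
  constructor
  · intro h; exact h i (by simp) j (by simp)
  · rintro h v hv w hw
    rw [Sym2.mem_iff] at hv hw
    rcases hv with rfl | rfl <;> rcases hw with rfl | rfl <;> simp [h]

open Classical in
lemma edge_factor (β : ℝ) (σ : V → Bool) (e : Sym2 V) :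
    Real.exp (β * Sym2.lift ⟨fun i j => spin (σ i) * spin (σ j), fun i j => by ring⟩ e)
      = Real.exp (-β) * (1 + (Real.exp (2 * β) - 1) * (if AgreeOn σ e then 1 else 0)) := by
  induction e using Sym2.ind with
  | _ i j =>
    rw [Sym2.lift_mk]
    dsimp only
    by_cases h : σ i = σ j
    · have h1 : spin (σ i) * spin (σ j) = 1 := by rw [h]; cases σ j <;> simp [spin]
      rw [if_pos ((agreeOn_mk σ i j).mpr h), h1]
      have : (1 + (Real.exp (2 * β) - 1) * 1) = Real.exp (2 * β) := by ring
      rw [this, ← Real.exp_add]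
      ring_nf
    · have h1 : spin (σ i) * spin (σ j) = -1 := by
        revert h; cases σ i <;> cases σ j <;> simp [spin]
      rw [if_neg (fun hc => h ((agreeOn_mk σ i j).mp hc)), h1]
      ring_nf

lemma walk_eq (σ : V → Bool) (ω : Finset (Sym2 V)) (h : ∀ e ∈ ω, AgreeOn σ e)
    {u v : V} (p : (SimpleGraph.fromEdgeSet (↑ω : Set (Sym2 V))).Walk u v) : σ u = σ v := by
  induction p with
  | nil => rfl
  | @cons a b c ha p ih =>
    rw [SimpleGraph.fromEdgeSet_adj] at ha
    exact (h _ ha.1 a (by simp) b (by simp)).trans ih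

/-- Spin configurations constant on `ω`-edges correspond to Boolean labellings of the
connected components of `(V, ω)`. -/
noncomputable def compEquiv (ω : Finset (Sym2 V)) :
    {σ : V → Bool // ∀ e ∈ ω, AgreeOn σ e} ≃
      ((SimpleGraph.fromEdgeSet (↑ω : Set (Sym2 V))).ConnectedComponent → Bool) where
  toFun σ := SimpleGraph.ConnectedComponent.lift σ.1
    (fun _ _ p _ => walk_eq σ.1 ω σ.2 p)
  invFun f := ⟨fun v => f ((SimpleGraph.fromEdgeSet (↑ω : Set (Sym2 V))).connectedComponentMk v),
    by
      intro e he v hv w hw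
      by_cases hvw : v = w
      · rw [hvw]
      · have he' : e = s(v, w) := (Sym2.mem_and_mem_iff hvw).mp ⟨hv, hw⟩
        have hadj : (SimpleGraph.fromEdgeSet (↑ω : Set (Sym2 V))).Adj v w := by
          rw [SimpleGraph.fromEdgeSet_adj]
          exact ⟨by rw [← he']; exact_mod_cast he, hvw⟩
        simp [SimpleGraph.ConnectedComponent.sound hadj.reachable]⟩
  left_inv σ := Subtype.ext rfl
  right_inv f := by
    funext c
    induction c using SimpleGraph.ConnectedComponent.ind with
    | _ v => rfl

open Classical in
lemma count_lemma (ω : Finset (Sym2 V)) :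
    ∑ σ : V → Bool, ∏ e ∈ ω, (if AgreeOn σ e then (1 : ℝ) else 0)
      = 2 ^ numComponents ω := by
  simp only [Finset.prod_boole]
  have hb := Finset.sum_boole (R := ℝ) (fun σ : V → Bool => ∀ e ∈ ω, AgreeOn σ e) Finset.univ
  have hcard : #(filter (fun σ : V → Bool => ∀ e ∈ ω, AgreeOn σ e) univ)
      = 2 ^ numComponents ω := by
    rw [← Fintype.card_subtype]
    rw [← Nat.card_eq_fintype_card, Nat.card_congr (compEquiv ω), Nat.card_fun]
    simp [numComponents, Nat.card_eq_fintype_card]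
  rw [show (2:ℝ) ^ numComponents ω = ((2 ^ numComponents ω : ℕ) : ℝ) by push_cast; ring]
  convert hb using 2 with σ
  · by_cases h : ∀ i ∈ ω, AgreeOn σ i <;> simp [h]
  · rfl
  · exact hcard.symm

end FKaux


/-- Discrete Fortuin–Kasteleyn representation of the Ising partition function:
`Z_G(β) = e^{-β|E|} Σ_{ω ⊆ E} (e^{2β} - 1)^{|ω|} 2^{c(ω)}`. -/
theorem isingZ_FK {V : Type*} [Fintype V] [DecidableEq V]
    (G : SimpleGraph V) [DecidableRel G.Adj] (β : ℝ) :
    isingZ G β =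
      Real.exp (-β * G.edgeFinset.card) *
        ∑ ω ∈ G.edgeFinset.powerset,
          (Real.exp (2 * β) - 1) ^ ω.card * 2 ^ numComponents ω := by
  classical
  set x := Real.exp (2 * β) - 1 with hx
  have step1 : isingZ G β = ∑ σ : V → Bool,
      (Real.exp (-β)) ^ G.edgeFinset.card *
        ∏ e ∈ G.edgeFinset, (x * (if AgreeOn σ e then 1 else 0) + 1) := by
    unfold isingZ isingEnergy
    refine Finset.sum_congr rfl fun σ _ => ?_
    rw [Finset.mul_sum, Real.exp_sum]
    rw [show (∏ e ∈ G.edgeFinset,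
        Real.exp (β * Sym2.lift ⟨fun i j => spin (σ i) * spin (σ j), fun i j => by ring⟩ e))
      = ∏ e ∈ G.edgeFinset,
        Real.exp (-β) * (1 + x * (if AgreeOn σ e then 1 else 0)) from
      Finset.prod_congr rfl fun e _ => edge_factor β σ e]
    rw [Finset.prod_mul_distrib, Finset.prod_const]
    congr 1
    exact Finset.prod_congr rfl fun e _ => by ring
  rw [step1, ← Finset.mul_sum]
  have hexp : Real.exp (-β) ^ G.edgeFinset.card = Real.exp (-β * G.edgeFinset.card) := by
    rw [← Real.exp_nat_mul]; ring_nf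
  rw [hexp]
  congr 1
  have step2 : ∀ σ : V → Bool,
      ∏ e ∈ G.edgeFinset, (x * (if AgreeOn σ e then 1 else 0) + 1)
        = ∑ ω ∈ G.edgeFinset.powerset,
            x ^ ω.card * ∏ e ∈ ω, (if AgreeOn σ e then (1 : ℝ) else 0) := by
    intro σ
    rw [Finset.prod_add]
    refine Finset.sum_congr rfl fun ω _ => ?_
    rw [Finset.prod_const_one, mul_one, Finset.prod_mul_distrib, Finset.prod_const]
  calc ∑ σ : V → Bool, ∏ e ∈ G.edgeFinset, (x * (if AgreeOn σ e then 1 else 0) + 1)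
      = ∑ σ : V → Bool, ∑ ω ∈ G.edgeFinset.powerset,
          x ^ ω.card * ∏ e ∈ ω, (if AgreeOn σ e then (1 : ℝ) else 0) := by
        exact Finset.sum_congr rfl fun σ _ => step2 σ
    _ = ∑ ω ∈ G.edgeFinset.powerset, ∑ σ : V → Bool,
          x ^ ω.card * ∏ e ∈ ω, (if AgreeOn σ e then (1 : ℝ) else 0) := Finset.sum_comm
    _ = ∑ ω ∈ G.edgeFinset.powerset, x ^ ω.card * (2 : ℝ) ^ numComponents ω := by
        refine Finset.sum_congr rfl fun ω _ => ?_
        rw [← Finset.mul_sum, count_lemma]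
end

section
/- Let G be a connected finite simple graph with vertex set V of cardinality n ≥ 1 and edge set E, and let u ≥ 1 be a real number. Then Σ_{ω ⊆ E} u^{|ω|} · 2^{c(ω)} ≥ 2·u^{|E|} − 2·u^{n−1} + 2·(u+2)^{n−1}. -/
open Finset

lemma numComponents_empty {V : Type*} [Fintype V] :
    numComponents (∅ : Finset (Sym2 V)) = Fintype.card V := by
  unfold numComponents
  rw [Finset.coe_empty, SimpleGraph.fromEdgeSet_empty]
  have hb : Function.Bijective ((⊥ : SimpleGraph V).connectedComponentMk) := by
    constructor
    · intro x y h
      exact SimpleGraph.reachable_bot.mp (SimpleGraph.ConnectedComponent.eq.mp h)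
    · exact fun c => c.exists_rep
  rw [← Nat.card_eq_fintype_card]
  exact (Nat.card_eq_of_bijective _ hb).symm

lemma one_le_numComponents {V : Type*} [Fintype V] [Nonempty V] (ω : Finset (Sym2 V)) :
    1 ≤ numComponents ω := by
  have : Nonempty (SimpleGraph.fromEdgeSet (↑ω : Set (Sym2 V))).ConnectedComponent :=
    ⟨(SimpleGraph.fromEdgeSet (↑ω : Set (Sym2 V))).connectedComponentMk (Classical.arbitrary V)⟩
  exact Nat.card_pos

lemma walk_aux {V : Type*} {H H' : SimpleGraph V} (a b : V)
    (hcase : ∀ x z, H'.Adj x z → H.Adj x z ∨ s(x, z) = s(a, b)) :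
    ∀ {x y : V}, H'.Walk x y → H.Reachable x y ∨
      ((H.Reachable x a ∨ H.Reachable x b) ∧ (H.Reachable y a ∨ H.Reachable y b)) := by
  intro x y p
  induction p with
  | nil => exact Or.inl (SimpleGraph.Reachable.refl _)
  | @cons x z y h p ih =>
    rcases hcase x z h with hadj | heq
    · rcases ih with hr | ⟨hz, hy⟩
      · exact Or.inl (hadj.reachable.trans hr)
      · exact Or.inr ⟨hz.imp hadj.reachable.trans hadj.reachable.trans, hy⟩
    · rw [Sym2.eq_iff] at heq
      have hxab : H.Reachable x a ∨ H.Reachable x b := by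
        rcases heq with ⟨hx, -⟩ | ⟨hx, -⟩
        · exact Or.inl (hx ▸ SimpleGraph.Reachable.refl _)
        · exact Or.inr (hx ▸ SimpleGraph.Reachable.refl _)
      have hzab : H.Reachable z a ∨ H.Reachable z b := by
        rcases heq with ⟨-, hz⟩ | ⟨-, hz⟩
        · exact Or.inr (hz ▸ SimpleGraph.Reachable.refl _)
        · exact Or.inl (hz ▸ SimpleGraph.Reachable.refl _)
      rcases ih with hr | ⟨-, hy⟩
      · exact Or.inr ⟨hxab, hzab.imp hr.symm.trans hr.symm.trans⟩
      · exact Or.inr ⟨hxab, hy⟩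

lemma numComponents_le_insert {V : Type*} [Fintype V] [DecidableEq V] (e : Sym2 V) (ω : Finset (Sym2 V)) :
    numComponents ω ≤ numComponents (insert e ω) + 1 := by
  classical
  induction e using Sym2.ind with
  | _ a b =>
  set H := SimpleGraph.fromEdgeSet (↑ω : Set (Sym2 V)) with hH
  set H' := SimpleGraph.fromEdgeSet (↑(insert s(a, b) ω) : Set (Sym2 V)) with hH'
  have hle : H ≤ H' := by
    rw [hH, hH']
    exact SimpleGraph.fromEdgeSet_mono (by rw [Finset.coe_insert]; exact Set.subset_insert _ _)
  have hcase : ∀ x z, H'.Adj x z → H.Adj x z ∨ s(x, z) = s(a, b) := by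
    intro x z h
    rw [hH', SimpleGraph.fromEdgeSet_adj, Finset.coe_insert, Set.mem_insert_iff] at h
    rcases h.1 with h1 | h1
    · exact Or.inr h1
    · exact Or.inl ((SimpleGraph.fromEdgeSet_adj _).mpr ⟨h1, h.2⟩)
  set φ : H.ConnectedComponent → H'.ConnectedComponent :=
    SimpleGraph.ConnectedComponent.map (SimpleGraph.Hom.ofLE hle) with hφ
  have key : ∀ c1 c2 : H.ConnectedComponent, φ c1 = φ c2 →
      c1 = c2 ∨ ((c1 = H.connectedComponentMk a ∨ c1 = H.connectedComponentMk b)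
        ∧ (c2 = H.connectedComponentMk a ∨ c2 = H.connectedComponentMk b)) := by
    refine SimpleGraph.ConnectedComponent.ind₂ fun x y h => ?_
    simp only [hφ, SimpleGraph.ConnectedComponent.map_mk,
      SimpleGraph.Hom.ofLE_apply] at h
    obtain ⟨p⟩ := SimpleGraph.ConnectedComponent.eq.mp h
    rcases walk_aux a b hcase p with hr | ⟨hx, hy⟩
    · exact Or.inl (SimpleGraph.ConnectedComponent.eq.mpr hr)
    · exact Or.inr ⟨hx.imp SimpleGraph.ConnectedComponent.eq.mpr
        SimpleGraph.ConnectedComponent.eq.mpr,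
        hy.imp SimpleGraph.ConnectedComponent.eq.mpr SimpleGraph.ConnectedComponent.eq.mpr⟩
  have hinj : Function.Injective (fun c : H.ConnectedComponent =>
      if c = H.connectedComponentMk a then (none : Option H'.ConnectedComponent)
      else some (φ c)) := by
    intro c1 c2 h
    by_cases h1 : c1 = H.connectedComponentMk a <;>
      by_cases h2 : c2 = H.connectedComponentMk a <;> simp [h1, h2] at h
    · exact h1.trans h2.symm
    · rcases key c1 c2 h with h | ⟨hc1, hc2⟩
      · exact h
      · rw [hc1.resolve_left h1, hc2.resolve_left h2]
  have hcard := Nat.card_le_card_of_injective _ hinj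
  rw [Finite.card_option] at hcard
  exact hcard

lemma card_le_numComponents_add {V : Type*} [Fintype V] (ω : Finset (Sym2 V)) :
    Fintype.card V ≤ numComponents ω + ω.card := by
  classical
  induction ω using Finset.induction_on with
  | empty => simp [numComponents_empty]
  | @insert e ω he ih =>
    have h1 := numComponents_le_insert e ω
    rw [Finset.card_insert_of_notMem he]
    omega

/-- For a connected graph on `n ≥ 1` vertices and `u ≥ 1`:
`Σ_{ω ⊆ E} u^{|ω|} 2^{c(ω)} ≥ 2 u^{|E|} - 2 u^{n-1} + 2 (u+2)^{n-1}`. -/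
theorem randomCluster_lower_bound_u_ge_one {V : Type*} [Fintype V] [DecidableEq V]
    (G : SimpleGraph V) [DecidableRel G.Adj] (hG : G.Connected)
    (hn : 1 ≤ Fintype.card V) (u : ℝ) (hu : 1 ≤ u) :
    ∑ ω ∈ G.edgeFinset.powerset, u ^ ω.card * 2 ^ numComponents ω ≥
      2 * u ^ G.edgeFinset.card - 2 * u ^ (Fintype.card V - 1)
        + 2 * (u + 2) ^ (Fintype.card V - 1) := by
  classical
  have hu0 : (0 : ℝ) ≤ u := le_trans zero_le_one hu
  have hVne : Nonempty V := Fintype.card_pos_iff.mp hn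
  set n := Fintype.card V with hndef
  -- the whole graph has one component
  have hEcomp : numComponents G.edgeFinset = 1 := by
    unfold numComponents
    rw [SimpleGraph.coe_edgeFinset, SimpleGraph.fromEdgeSet_edgeSet]
    rw [Nat.card_eq_one_iff_unique]
    exact ⟨⟨SimpleGraph.ConnectedComponent.ind₂ fun x y =>
      SimpleGraph.ConnectedComponent.eq.mpr (hG.preconnected x y)⟩,
      ⟨G.connectedComponentMk (Classical.arbitrary V)⟩⟩
  have hm : n - 1 ≤ G.edgeFinset.card := by
    have := card_le_numComponents_add (V := V) G.edgeFinset
    omega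
  obtain ⟨F, hFE, hFcard⟩ := Finset.exists_subset_card_eq hm
  have hsplit : ∑ ω ∈ G.edgeFinset.powerset, u ^ ω.card * 2 ^ numComponents ω
      = ∑ ω ∈ F.powerset, u ^ ω.card * 2 ^ numComponents ω
        + ∑ ω ∈ G.edgeFinset.powerset \ F.powerset, u ^ ω.card * 2 ^ numComponents ω := by
    rw [← Finset.sum_sdiff (Finset.powerset_mono.mpr hFE)]
    ring
  have hb1 : 2 * (u + 2) ^ (n - 1) ≤
      ∑ ω ∈ F.powerset, u ^ ω.card * 2 ^ numComponents ω := by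
    have heq : 2 * (u + 2) ^ (n - 1)
        = ∑ ω ∈ F.powerset, u ^ ω.card * 2 * 2 ^ ((n - 1) - ω.card) := by
      have hpa := Finset.prod_add (fun _ : Sym2 V => u) (fun _ => (2 : ℝ)) F
      simp only [Finset.prod_const] at hpa
      rw [← hFcard, hpa, Finset.mul_sum]
      refine Finset.sum_congr rfl fun ω hω => ?_
      rw [Finset.card_sdiff_of_subset (Finset.mem_powerset.mp hω)]
      ring
    rw [heq]
    refine Finset.sum_le_sum fun ω hω => ?_
    have hωc : ω.card ≤ n - 1 := hFcard ▸ Finset.card_le_card (Finset.mem_powerset.mp hω)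
    have hcc := card_le_numComponents_add ω
    have h1 : (n - 1) - ω.card + 1 ≤ numComponents ω := by omega
    have h2 : (2 : ℝ) ^ ((n - 1) - ω.card + 1) ≤ 2 ^ numComponents ω :=
      pow_le_pow_right₀ one_le_two h1
    calc u ^ ω.card * 2 * 2 ^ ((n - 1) - ω.card)
        = u ^ ω.card * 2 ^ ((n - 1) - ω.card + 1) := by rw [pow_succ]; ring
      _ ≤ u ^ ω.card * 2 ^ numComponents ω :=
        mul_le_mul_of_nonneg_left h2 (pow_nonneg hu0 _)
  have hb2 : 2 * u ^ G.edgeFinset.card - 2 * u ^ (n - 1) ≤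
      ∑ ω ∈ G.edgeFinset.powerset \ F.powerset, u ^ ω.card * 2 ^ numComponents ω := by
    rcases eq_or_lt_of_le hm with h | h
    · have hFeq : F = G.edgeFinset := Finset.eq_of_subset_of_card_le hFE (by omega)
      rw [hFeq, Finset.sdiff_self, Finset.sum_empty, ← h]
      linarith
    · have hE : G.edgeFinset ∈ G.edgeFinset.powerset \ F.powerset := by
        rw [Finset.mem_sdiff, Finset.mem_powerset, Finset.mem_powerset]
        refine ⟨Finset.Subset.refl _, fun hsub => ?_⟩
        have := Finset.card_le_card hsub
        omega
      have hsum := Finset.single_le_sum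
        (f := fun ω => u ^ ω.card * (2:ℝ) ^ numComponents ω)
        (fun ω _ => mul_nonneg (pow_nonneg hu0 _) (pow_nonneg (by norm_num) _)) hE
      have h2 : (2 : ℝ) ≤ 2 ^ numComponents G.edgeFinset := by
        calc (2:ℝ) = 2 ^ 1 := (pow_one 2).symm
          _ ≤ 2 ^ numComponents G.edgeFinset :=
            pow_le_pow_right₀ one_le_two (one_le_numComponents _)
      have h3 : 2 * u ^ G.edgeFinset.card ≤
          u ^ G.edgeFinset.card * 2 ^ numComponents G.edgeFinset := by
        have := mul_le_mul_of_nonneg_left h2 (pow_nonneg hu0 G.edgeFinset.card)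
        linarith
      have h4 : (0:ℝ) ≤ u ^ (n - 1) := pow_nonneg hu0 _
      linarith
  rw [ge_iff_le, hsplit]
  linarith
end

section
/- Let G be a connected finite simple graph with vertex set V of cardinality n ≥ 1 and edge set E, with every vertex of degree at most 3, and let 0 < u ≤ 1 be a real number. Then Σ_{ω ⊆ E} u^{|ω|} · 2^{c(ω)} ≥ 2·u^{|E|} + 2·u^{3n/2}·(3^{n−1} − 1), where u^{3n/2} denotes the real power exp((3n/2)·ln u). -/
open Finset

section Aux
open SimpleGraph

private lemma reach_decomp' {V : Type*} {H : SimpleGraph V} {a b x y : V}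
    (h : (H ⊔ SimpleGraph.fromEdgeSet {s(a,b)}).Reachable x y) :
    H.Reachable x y ∨
      ((H.Reachable x a ∨ H.Reachable x b) ∧ (H.Reachable y a ∨ H.Reachable y b)) := by
  obtain ⟨w⟩ := h
  induction w with
  | nil => exact Or.inl (Reachable.refl _)
  | @cons p q r hadj w ih =>
    rcases hadj with hH | hE
    · rcases ih with h1 | ⟨h2, h3⟩
      · exact Or.inl (hH.reachable.trans h1)
      · exact Or.inr ⟨h2.imp hH.reachable.trans hH.reachable.trans, h3⟩
    · rw [SimpleGraph.fromEdgeSet_adj, Set.mem_singleton_iff, Sym2.eq_iff] at hE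
      obtain ⟨⟨rfl, rfl⟩ | ⟨rfl, rfl⟩, hne⟩ := hE
      · refine Or.inr ⟨Or.inl (Reachable.refl _), ?_⟩
        rcases ih with h1 | ⟨_, h3⟩
        · exact Or.inr h1.symm
        · exact h3
      · refine Or.inr ⟨Or.inr (Reachable.refl _), ?_⟩
        rcases ih with h1 | ⟨_, h3⟩
        · exact Or.inl h1.symm
        · exact h3

private lemma card_cc_le' {V : Type*} [Finite V] (H : SimpleGraph V) (a b : V) :
    Nat.card H.ConnectedComponent ≤
      Nat.card (H ⊔ SimpleGraph.fromEdgeSet {s(a,b)}).ConnectedComponent + 1 := by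
  classical
  set H' := H ⊔ SimpleGraph.fromEdgeSet {s(a,b)} with hH'
  have hle : H ≤ H' := le_sup_left
  let φ : H.ConnectedComponent → H'.ConnectedComponent :=
    ConnectedComponent.map (Hom.ofLE hle)
  let χ : H.ConnectedComponent → H'.ConnectedComponent ⊕ Unit :=
    fun c => if c = H.connectedComponentMk b then Sum.inr () else Sum.inl (φ c)
  have hinj : Function.Injective χ := by
    intro c1 c2 hc
    simp only [χ] at hc
    by_cases h1 : c1 = H.connectedComponentMk b
    · by_cases h2 : c2 = H.connectedComponentMk b
      · exact h1.trans h2.symm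
      · rw [if_pos h1, if_neg h2] at hc; exact absurd hc (by simp)
    · by_cases h2 : c2 = H.connectedComponentMk b
      · rw [if_neg h1, if_pos h2] at hc; exact absurd hc (by simp)
      · rw [if_neg h1, if_neg h2] at hc
        obtain ⟨x, rfl⟩ := c1.exists_rep
        obtain ⟨y, rfl⟩ := c2.exists_rep
        simp only [Sum.inl.injEq, φ, ConnectedComponent.map_mk] at hc
        have hr : H'.Reachable x y := ConnectedComponent.exact hc
        rcases reach_decomp' hr with h | ⟨hx, hy⟩
        · exact ConnectedComponent.sound h
        · have hxa : H.Reachable x a := by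
            rcases hx with h' | h'
            · exact h'
            · exact absurd (ConnectedComponent.sound h') h1
          have hya : H.Reachable y a := by
            rcases hy with h' | h'
            · exact h'
            · exact absurd (ConnectedComponent.sound h') h2
          exact ConnectedComponent.sound (hxa.trans hya.symm)
  have := Nat.card_le_card_of_injective χ hinj
  simpa [Nat.card_sum] using this


private lemma card_le_components' {V : Type*} [Fintype V] [DecidableEq V]
    (ω : Finset (Sym2 V)) :
    (∀ e ∈ ω, ¬ e.IsDiag) → Fintype.card V ≤ numComponents ω + ω.card := by
  classical
  induction ω using Finset.induction_on with
  | empty =>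
    intro _
    simp only [numComponents, Finset.coe_empty, SimpleGraph.fromEdgeSet_empty,
      Finset.card_empty, add_zero]
    rw [← Nat.card_eq_fintype_card]
    refine Nat.card_le_card_of_injective (⊥ : SimpleGraph V).connectedComponentMk ?_
    intro x y h
    exact (SimpleGraph.reachable_bot).mp (ConnectedComponent.exact h)
  | @insert e s he ih =>
    intro hd
    obtain ⟨⟨a, b⟩, rfl⟩ := Quot.mk_surjective e
    have hab : a ≠ b := by simpa using hd s(a, b) (Finset.mem_insert_self _ _)
    show Fintype.card V ≤ numComponents (insert s(a, b) s) + (insert s(a, b) s).card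
    have hstep : numComponents s ≤ numComponents (insert s(a, b) s) + 1 := by
      have hrw : SimpleGraph.fromEdgeSet (↑(insert s(a, b) s) : Set (Sym2 V)) =
          SimpleGraph.fromEdgeSet (↑s : Set (Sym2 V)) ⊔
            SimpleGraph.fromEdgeSet {s(a, b)} := by
        rw [Finset.coe_insert, Set.insert_eq, SimpleGraph.fromEdgeSet_union, sup_comm]
      rw [numComponents, numComponents, hrw]
      exact card_cc_le' _ a b
    have hcard : (insert s(a, b) s).card = s.card + 1 := Finset.card_insert_of_notMem he
    have hih := ih (fun e hes => hd e (Finset.mem_insert_of_mem hes))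
    omega

end Aux

open SimpleGraph in
/-- For a connected graph on `n ≥ 1` vertices with maximal degree at most `3`
and `0 < u ≤ 1`:
`Σ_{ω ⊆ E} u^{|ω|} 2^{c(ω)} ≥ 2 u^{|E|} + 2 u^{3n/2} (3^{n-1} - 1)`,
where `u^{3n/2}` is the real power `exp((3n/2) ln u)`. -/
theorem randomCluster_lower_bound_u_le_one {V : Type*} [Fintype V] [DecidableEq V]
    (G : SimpleGraph V) [DecidableRel G.Adj] (hG : G.Connected)
    (hn : 1 ≤ Fintype.card V) (hdeg : ∀ v : V, G.degree v ≤ 3)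
    (u : ℝ) (hu0 : 0 < u) (hu1 : u ≤ 1) :
    ∑ ω ∈ G.edgeFinset.powerset, u ^ ω.card * 2 ^ numComponents ω ≥
      2 * u ^ G.edgeFinset.card
        + 2 * u ^ ((3 * (Fintype.card V : ℝ)) / 2)
            * ((3 : ℝ) ^ (Fintype.card V - 1) - 1) := by
  classical
  have hVne : Nonempty V := Fintype.card_pos_iff.mp hn
  set n := Fintype.card V with hndef
  set m := G.edgeFinset.card with hmdef
  have hkey : ∀ ω ∈ G.edgeFinset.powerset, n ≤ numComponents ω + ω.card := by
    intro ω hωmem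
    refine card_le_components' ω fun e he => ?_
    exact G.not_isDiag_of_mem_edgeSet
      (SimpleGraph.mem_edgeFinset.mp (Finset.mem_powerset.mp hωmem he))
  have hccE : numComponents G.edgeFinset = 1 := by
    have hGE : SimpleGraph.fromEdgeSet (↑G.edgeFinset : Set (Sym2 V)) = G := by
      rw [SimpleGraph.coe_edgeFinset, SimpleGraph.fromEdgeSet_edgeSet]
    rw [numComponents, hGE]
    have hsub : Subsingleton G.ConnectedComponent := by
      constructor
      intro c d
      obtain ⟨x, rfl⟩ := c.exists_rep
      obtain ⟨y, rfl⟩ := d.exists_rep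
      exact ConnectedComponent.sound (hG.preconnected x y)
    have hne : Nonempty G.ConnectedComponent := Nonempty.map G.connectedComponentMk hVne
    exact Nat.card_eq_one_iff_unique.mpr ⟨hsub, hne⟩
  have hEmem : G.edgeFinset ∈ G.edgeFinset.powerset := Finset.mem_powerset_self _
  have hmn : n ≤ m + 1 := by
    have h := hkey G.edgeFinset hEmem
    rw [hccE] at h; omega
  have h2m : 2 * m ≤ 3 * n := by
    have h1 := G.sum_degrees_eq_twice_card_edges
    have h2 : ∑ v : V, G.degree v ≤ ∑ _v : V, 3 := Finset.sum_le_sum fun v _ => hdeg v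
    rw [Finset.sum_const, Finset.card_univ, smul_eq_mul] at h2
    omega
  have hm32 : (m : ℝ) ≤ 3 * (n : ℝ) / 2 := by
    have : (2 * m : ℝ) ≤ 3 * n := by exact_mod_cast h2m
    linarith
  set A := u ^ ((3 * (n : ℝ)) / 2) with hAdef
  have hA0 : 0 < A := Real.rpow_pos_of_pos hu0 _
  have hAle : ∀ k : ℕ, k ≤ m → A ≤ u ^ k := by
    intro k hk
    rw [← Real.rpow_natCast u k]
    refine Real.rpow_le_rpow_of_exponent_ge hu0 hu1 ?_
    refine le_trans ?_ hm32
    exact_mod_cast hk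
  have hterm : ∀ ω ∈ (G.edgeFinset.powerset).erase G.edgeFinset,
      A * 2 ^ (n - ω.card) ≤ u ^ ω.card * 2 ^ numComponents ω := by
    intro ω hω
    have hωp := Finset.mem_of_mem_erase hω
    have hcard : ω.card ≤ m := Finset.card_le_card (Finset.mem_powerset.mp hωp)
    have h2 : (2:ℝ) ^ (n - ω.card) ≤ 2 ^ numComponents ω := by
      refine pow_le_pow_right₀ one_le_two ?_
      have := hkey ω hωp; omega
    exact mul_le_mul (hAle _ hcard) h2 (by positivity) (pow_nonneg hu0.le _)
  have hprod : ∑ ω ∈ G.edgeFinset.powerset, ((1:ℝ)/2) ^ ω.card = (3/2) ^ m := by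
    calc ∑ ω ∈ G.edgeFinset.powerset, ((1:ℝ)/2) ^ ω.card
        = ∏ _i ∈ G.edgeFinset, ((1:ℝ)/2 + 1) := by
          rw [Finset.prod_add]
          refine Finset.sum_congr rfl fun t ht => ?_
          simp [Finset.prod_const]
      _ = (3/2) ^ m := by rw [Finset.prod_const]; norm_num [hmdef]
  have hS2 : (2:ℝ)^n * (3/2)^m ≤ ∑ ω ∈ G.edgeFinset.powerset, (2:ℝ) ^ (n - ω.card) := by
    have hterm2 : ∀ ω ∈ G.edgeFinset.powerset,
        (2:ℝ)^n * ((1:ℝ)/2) ^ ω.card ≤ 2 ^ (n - ω.card) := by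
      intro ω _
      have h1 : (2:ℝ)^n ≤ 2 ^ (n - ω.card) * 2 ^ ω.card := by
        rw [← pow_add]
        exact pow_le_pow_right₀ one_le_two (by omega)
      have h2 : (0:ℝ) < 2 ^ ω.card := by positivity
      calc (2:ℝ)^n * ((1:ℝ)/2)^ω.card = 2^n / 2^ω.card := by
            rw [div_pow, one_pow, mul_one_div]
        _ ≤ 2^(n-ω.card) := (div_le_iff₀ h2).mpr h1
    calc (2:ℝ)^n * (3/2)^m = ∑ ω ∈ G.edgeFinset.powerset, (2:ℝ)^n * ((1:ℝ)/2)^ω.card := by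
          rw [← Finset.mul_sum, hprod]
      _ ≤ ∑ ω ∈ G.edgeFinset.powerset, (2:ℝ)^(n-ω.card) := Finset.sum_le_sum hterm2
  have hgE : (2:ℝ) ^ (n - m) ≤ 2 := by
    calc (2:ℝ) ^ (n - m) ≤ 2 ^ (1:ℕ) := pow_le_pow_right₀ one_le_two (by omega)
      _ = 2 := pow_one 2
  have hS3 : (2:ℝ)^n * (3/2)^m - 2 ≤
      ∑ ω ∈ (G.edgeFinset.powerset).erase G.edgeFinset, (2:ℝ) ^ (n - ω.card) := by
    have hsplit2 := Finset.add_sum_erase G.edgeFinset.powerset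
      (fun ω => (2:ℝ) ^ (n - ω.card)) hEmem
    linarith [hS2, hsplit2, hgE]
  have hp2 : 2 * (3:ℝ)^(n-1) ≤ 2^n * (3/2)^m := by
    have h1 : ((3:ℝ)/2)^(n-1) ≤ (3/2)^m := pow_le_pow_right₀ (by norm_num) (by omega)
    have h2 : (2:ℝ)^n = 2 * (2:ℝ)^(n-1) := by
      rw [← pow_succ']
      congr 1; omega
    have h3 : (0:ℝ) ≤ 2^n := by positivity
    calc 2 * (3:ℝ)^(n-1) = 2 * (2 * (3/2))^(n-1) := by norm_num
      _ = 2 * 2^(n-1) * (3/2)^(n-1) := by rw [mul_pow, mul_assoc]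
      _ = 2^n * (3/2)^(n-1) := by rw [h2]
      _ ≤ 2^n * (3/2)^m := mul_le_mul_of_nonneg_left h1 h3
  have hrest : A * (2 * (3:ℝ)^(n-1) - 2) ≤
      ∑ ω ∈ (G.edgeFinset.powerset).erase G.edgeFinset, u^ω.card * 2^numComponents ω := by
    calc A * (2 * (3:ℝ)^(n-1) - 2) ≤ A * ((2:ℝ)^n*(3/2)^m - 2) := by
          apply mul_le_mul_of_nonneg_left _ hA0.le; linarith
      _ ≤ A * (∑ ω ∈ (G.edgeFinset.powerset).erase G.edgeFinset, (2:ℝ)^(n-ω.card)) := by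
          apply mul_le_mul_of_nonneg_left hS3 hA0.le
      _ = ∑ ω ∈ (G.edgeFinset.powerset).erase G.edgeFinset, A * (2:ℝ)^(n-ω.card) := by
          rw [Finset.mul_sum]
      _ ≤ _ := Finset.sum_le_sum hterm
  rw [ge_iff_le, ← Finset.add_sum_erase G.edgeFinset.powerset _ hEmem]
  simp only [hccE, pow_one]
  have hexp : 2 * A * ((3:ℝ)^(n-1) - 1) = A * (2 * (3:ℝ)^(n-1) - 2) := by ring
  linarith [hrest]
end

section
/- For every real μ < ln 2 and every integer N ≥ 1, the transfer-matrix partition function of pure causal dynamical triangulations diverges: Z_N(μ) = +∞ (as a sum in the extended nonnegative reals). -/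
open scoped ENNReal

/-- The transfer-matrix weight `u(n, n') = C(n + n' - 1, n - 1) e^{-μ(n + n')}` of pure
causal dynamical triangulations, as an extended nonnegative real. -/
noncomputable def cdtWeight (μ : ℝ) (n n' : ℕ+) : ℝ≥0∞ :=
  ENNReal.ofReal
    ((((n : ℕ) + (n' : ℕ) - 1).choose ((n : ℕ) - 1) : ℝ) *
      Real.exp (-μ * ((n : ℕ) + (n' : ℕ))))

/-- The pure CDT transfer-matrix partition function
`Z_N(μ) = Σ_{(n_1, …, n_N) ∈ (ℕ≥1)^N} Π_i C(n_i + n_{i+1} - 1, n_i - 1) e^{-μ(n_i + n_{i+1})}`,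
with cyclic indices (the successor of `i` taken via the cyclic rotation `finRotate`), as a sum in the extended nonnegative reals. -/
noncomputable def cdtZ (N : ℕ) (μ : ℝ) : ℝ≥0∞ :=
  ∑' f : Fin N → ℕ+, ∏ i : Fin N, cdtWeight μ (f i) (f (finRotate N i))

/-- The real diagonal weight is at least `1` once `n ≥ 1` satisfies the exponential bound. -/
lemma cdt_real_weight_ge_one (μ : ℝ) (n : ℕ) (hn : 1 ≤ n)
    (h : 4 * (n:ℝ) + 2 ≤ Real.exp ((n:ℝ) * (2 * (Real.log 2 - μ)))) :
    1 ≤ ((n + n - 1).choose (n - 1) : ℝ) * Real.exp (-μ * ((n:ℕ) + (n:ℕ))) := by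
  obtain ⟨m, rfl⟩ : ∃ m, n = m + 1 := ⟨n - 1, by omega⟩
  set k := m + 1 with hk
  have hchoose : 2 * (k + k - 1).choose (k - 1) = Nat.centralBinom k := by
    rw [Nat.centralBinom_eq_two_mul_choose]
    have h1 : 2 * (m + 1) = (2 * m + 1) + 1 := by ring
    have h2 : (m + 1) + (m + 1) - 1 = 2 * m + 1 := by ring_nf; omega
    rw [h1, h2, Nat.add_sub_cancel, Nat.choose_succ_succ, Nat.choose_symm_half, two_mul]
  have hfour : 4 ^ k ≤ (2 * k + 1) * (2 * (k + k - 1).choose (k - 1)) := by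
    rw [hchoose, Nat.centralBinom_eq_two_mul_choose]
    exact Nat.four_pow_le_two_mul_add_one_mul_central_binom k
  have hfourR : (4:ℝ) ^ k ≤ (4 * k + 2) * ((k + k - 1).choose (k - 1) : ℝ) := by
    have := (Nat.cast_le (α := ℝ)).mpr hfour
    push_cast at this ⊢
    nlinarith [this]
  have hexp : Real.exp ((k:ℝ) * (2 * (Real.log 2 - μ)))
      = (4:ℝ) ^ k * Real.exp (-μ * ((k:ℕ) + (k:ℕ))) := by
    have hlog4 : Real.log 4 = 2 * Real.log 2 := by
      rw [show (4:ℝ) = 2 ^ 2 by norm_num, Real.log_pow]; push_cast; ring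
    have h4 : (4:ℝ) ^ k = Real.exp ((k:ℝ) * Real.log 4) := by
      rw [Real.exp_nat_mul, Real.exp_log (by norm_num : (0:ℝ) < 4)]
    rw [h4, ← Real.exp_add]
    congr 1
    push_cast
    rw [hlog4]; ring
  have hE : (0:ℝ) < Real.exp (-μ * ((k:ℕ) + (k:ℕ))) := Real.exp_pos _
  have hkpos : (0:ℝ) < 4 * (k:ℝ) + 2 := by positivity
  rw [hexp] at h
  have hC : (0:ℝ) ≤ ((k + k - 1).choose (k - 1) : ℝ) := by positivity
  nlinarith [h, hfourR, hE, hkpos, hC]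

/-- For every `μ < ln 2` and every `N ≥ 1`, the pure CDT transfer-matrix partition
function diverges: `Z_N(μ) = +∞`. -/
theorem cdtZ_eq_top (μ : ℝ) (hμ : μ < Real.log 2) (N : ℕ) (hN : 1 ≤ N) :
    cdtZ N μ = ⊤ := by
  have hε : 0 < 2 * (Real.log 2 - μ) := by linarith
  -- eventually the exponential dominates the linear term
  have hev : ∀ᶠ n : ℕ in Filter.atTop,
      (4 * (n:ℝ) + 2) ≤ Real.exp ((n:ℝ) * (2 * (Real.log 2 - μ))) := by
    have h1 : Filter.Tendsto (fun x : ℝ => Real.exp x / x) Filter.atTop Filter.atTop := by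
      simpa using Real.tendsto_exp_div_pow_atTop 1
    have h2 : Filter.Tendsto (fun n : ℕ => (n:ℝ) * (2 * (Real.log 2 - μ)))
        Filter.atTop Filter.atTop :=
      (tendsto_natCast_atTop_atTop).atTop_mul_const hε
    have h3 := (h1.comp h2).eventually_ge_atTop (6 / (2 * (Real.log 2 - μ)))
    filter_upwards [h3, Filter.eventually_ge_atTop 1] with n hn hn1
    have hn1' : (1:ℝ) ≤ n := by exact_mod_cast hn1
    have hnpos : (0:ℝ) < (n:ℝ) * (2 * (Real.log 2 - μ)) := by positivity
    simp only [Function.comp] at hn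
    rw [div_le_div_iff₀ hε hnpos] at hn
    nlinarith [hn, hε, hn1']
  obtain ⟨n0, hn0⟩ := (hev.and (Filter.eventually_ge_atTop 1)).exists_forall_of_atTop
  -- the diagonal weight is eventually at least 1
  have hw : ∀ k : ℕ, 1 ≤ cdtWeight μ ⟨k + n0 + 1, Nat.succ_pos _⟩ ⟨k + n0 + 1, Nat.succ_pos _⟩ := by
    intro k
    obtain ⟨hb, hb1⟩ := hn0 (k + n0 + 1) (by omega)
    unfold cdtWeight
    rw [ENNReal.one_le_ofReal]
    exact cdt_real_weight_ge_one μ (k + n0 + 1) hb1 hb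
  -- restrict the sum to constant configurations
  have step1 : (∑' n : ℕ+, (cdtWeight μ n n) ^ N) ≤ cdtZ N μ := by
    have hinj : Function.Injective (fun n : ℕ+ => (fun _ : Fin N => n)) := by
      intro a b h
      exact congrFun h ⟨0, hN⟩
    have := ENNReal.tsum_comp_le_tsum_of_injective hinj
      (fun f : Fin N → ℕ+ => ∏ i : Fin N, cdtWeight μ (f i) (f (finRotate N i)))
    simpa [cdtZ, Finset.prod_const, Finset.card_univ] using this
  -- the restricted sum diverges
  have step2 : (⊤ : ℝ≥0∞) ≤ ∑' n : ℕ+, (cdtWeight μ n n) ^ N := by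
    have hinj2 : Function.Injective (fun k : ℕ => (⟨k + n0 + 1, Nat.succ_pos _⟩ : ℕ+)) := by
      intro a b h
      have := congrArg (fun x : ℕ+ => (x : ℕ)) h
      simpa using this
    calc (⊤ : ℝ≥0∞) = ∑' _ : ℕ, (1 : ℝ≥0∞) :=
          (ENNReal.tsum_const_eq_top_of_ne_zero one_ne_zero).symm
      _ ≤ ∑' k : ℕ, (cdtWeight μ (⟨k + n0 + 1, Nat.succ_pos _⟩ : ℕ+)
            (⟨k + n0 + 1, Nat.succ_pos _⟩ : ℕ+)) ^ N := by
          refine ENNReal.tsum_le_tsum fun k => ?_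
          calc (1:ℝ≥0∞) = 1 ^ N := (one_pow N).symm
            _ ≤ _ := pow_le_pow_left' (hw k) N
      _ ≤ _ := ENNReal.tsum_comp_le_tsum_of_injective hinj2 (fun n : ℕ+ => (cdtWeight μ n n) ^ N)
  exact top_le_iff.mp (step2.trans step1)
end

section
/- For every real μ > ln 2 and every integer N ≥ 1, the transfer-matrix partition function of pure causal dynamical triangulations is finite: Z_N(μ) < +∞. -/
open scoped ENNReal

lemma choose_le_two_pow' (n k : ℕ) : n.choose k ≤ 2 ^ n := by
  rcases le_or_gt k n with h | h
  · calc n.choose k ≤ ∑ m ∈ Finset.range (n + 1), n.choose m :=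
        Finset.single_le_sum (fun _ _ => Nat.zero_le _)
          (Finset.mem_range.mpr (Nat.lt_succ_of_le h))
    _ = 2 ^ n := Nat.sum_range_choose n
  · simp [Nat.choose_eq_zero_of_lt h]

/-- Factorization of a tsum of products over a finite pi type, in `ℝ≥0∞`. -/
lemma tsum_pi_prod {α : Type*} (g : α → ℝ≥0∞) :
    ∀ N : ℕ, ∑' f : Fin N → α, ∏ i : Fin N, g (f i) = (∑' a : α, g a) ^ N := by
  intro N
  induction N with
  | zero =>
    rw [pow_zero]
    rw [tsum_eq_single (fun i => (Fin.elim0 i : α))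
      (by intro f hf; exact absurd (funext fun i => i.elim0) hf)]
    simp
  | succ n ih =>
    rw [← (Fin.consEquiv (fun _ : Fin (n + 1) => α)).tsum_eq]
    simp only [Fin.consEquiv_apply]
    rw [ENNReal.tsum_prod']
    have h : ∀ (a : α) (f : Fin n → α),
        (∏ i : Fin (n + 1), g ((Fin.cons a f : Fin (n + 1) → α) i))
          = g a * ∏ i : Fin n, g (f i) := by
      intro a f
      rw [Fin.prod_univ_succ]
      simp
    simp_rw [h, ENNReal.tsum_mul_left, ENNReal.tsum_mul_right, ih, pow_succ]
    ring

lemma cdtWeight_le (μ : ℝ) (n n' : ℕ+) :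
    cdtWeight μ n n' ≤ (ENNReal.ofReal (2 * Real.exp (-μ))) ^ ((n : ℕ) + (n' : ℕ)) := by
  unfold cdtWeight
  rw [← ENNReal.ofReal_pow (by positivity)]
  apply ENNReal.ofReal_le_ofReal
  rw [mul_pow, ← Real.exp_nat_mul]
  have h1 : (((n : ℕ) + (n' : ℕ) - 1).choose ((n : ℕ) - 1) : ℝ)
      ≤ (2 : ℝ) ^ ((n : ℕ) + (n' : ℕ)) := by
    have := (choose_le_two_pow' ((n : ℕ) + (n' : ℕ) - 1) ((n : ℕ) - 1)).trans
      (Nat.pow_le_pow_right (by norm_num) (Nat.sub_le _ _))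
    exact_mod_cast this
  have h2 : Real.exp (-μ * ((n : ℕ) + (n' : ℕ)))
      = Real.exp (((n : ℕ) + (n' : ℕ) : ℕ) * (-μ)) := by
    push_cast
    ring_nf
  rw [h2]
  exact mul_le_mul_of_nonneg_right h1 (Real.exp_nonneg _)

/-- For every `μ > ln 2` and every `N ≥ 1`, the pure CDT transfer-matrix partition
function is finite: `Z_N(μ) < +∞`. -/
theorem cdtZ_lt_top (μ : ℝ) (hμ : Real.log 2 < μ) (N : ℕ) (hN : 1 ≤ N) :
    cdtZ N μ < ⊤ := by
  set r : ℝ≥0∞ := ENNReal.ofReal (2 * Real.exp (-μ)) with hr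
  have hr1 : r < 1 := by
    rw [hr, ← ENNReal.ofReal_one]
    apply ENNReal.ofReal_lt_ofReal_iff_of_nonneg (by positivity) |>.mpr
    have h : Real.exp (-μ) < 1 / 2 := by
      rw [show (1 : ℝ) / 2 = Real.exp (-(Real.log 2)) by
        rw [Real.exp_neg, Real.exp_log (by norm_num : (0:ℝ) < 2)]; norm_num]
      exact Real.exp_lt_exp.mpr (by linarith)
    linarith
  have key : cdtZ N μ ≤ (∑' m : ℕ+, (r ^ 2) ^ (m : ℕ)) ^ N := by
    rw [← tsum_pi_prod (fun m : ℕ+ => (r ^ 2) ^ (m : ℕ)) N]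
    apply ENNReal.tsum_le_tsum
    intro f
    calc ∏ i : Fin N, cdtWeight μ (f i) (f (finRotate N i))
        ≤ ∏ i : Fin N, r ^ ((f i : ℕ) + (f (finRotate N i) : ℕ)) :=
          Finset.prod_le_prod' fun i _ => cdtWeight_le μ (f i) (f (finRotate N i))
      _ = (∏ i : Fin N, r ^ (f i : ℕ)) * ∏ i : Fin N, r ^ ((f (finRotate N i)) : ℕ) := by
          rw [← Finset.prod_mul_distrib]
          exact Finset.prod_congr rfl fun i _ => pow_add r _ _
      _ = (∏ i : Fin N, r ^ (f i : ℕ)) * ∏ i : Fin N, r ^ (f i : ℕ) := by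
          congr 1
          exact Fintype.prod_equiv (finRotate N) _ _ fun i => rfl
      _ = ∏ i : Fin N, (r ^ 2) ^ ((f i : ℕ)) := by
          rw [← Finset.prod_mul_distrib]
          exact Finset.prod_congr rfl fun i _ => by
            rw [← pow_add, ← two_mul, pow_mul]
  have hsum : (∑' m : ℕ+, (r ^ 2) ^ (m : ℕ)) < ⊤ := by
    have hle : (∑' m : ℕ+, (r ^ 2) ^ (m : ℕ)) ≤ ∑' m : ℕ, (r ^ 2) ^ m :=
      ENNReal.tsum_comp_le_tsum_of_injective
        (fun a b h => PNat.coe_injective h) (fun m => (r ^ 2) ^ m)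
    refine hle.trans_lt ?_
    rw [ENNReal.tsum_geometric]
    apply ENNReal.inv_lt_top.mpr
    have hlt : r ^ 2 < 1 := by
      calc r ^ 2 ≤ r * 1 := by rw [sq]; exact mul_le_mul_right hr1.le r
      _ = r := mul_one r
      _ < 1 := hr1
    exact tsub_pos_of_lt hlt
  calc cdtZ N μ ≤ _ := key
    _ < ⊤ := ENNReal.pow_lt_top hsum
end

section
/- For every β > 0 there exists μ > 0 such that λ(β,μ) < 1; consequently the set {μ > 0 : λ(β,μ) < 1} is nonempty and ψ(β) = inf{μ > 0 : λ(β,μ) < 1} is a finite nonnegative real number. -/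
/-- `c = e^{β-μ} / (e^{2β}(1 - e^{β-μ})² - e^{-2μ})`. -/
noncomputable def cFun (β μ : ℝ) : ℝ :=
  Real.exp (β - μ) /
    (Real.exp (2 * β) * (1 - Real.exp (β - μ)) ^ 2 - Real.exp (-2 * μ))

/-- `m = e^{2β} + (1 - e^{4β}) e^{-(β+μ)}`. -/
noncomputable def mFun (β μ : ℝ) : ℝ :=
  Real.exp (2 * β) + (1 - Real.exp (4 * β)) * Real.exp (-(β + μ))

/-- `λ(β,μ) = c²(m²+1)cosh(2β)(1 + √(1 - (m²-1)²/((m²+1)² cosh²(2β))))`. -/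
noncomputable def lamFun (β μ : ℝ) : ℝ :=
  (cFun β μ) ^ 2 * ((mFun β μ) ^ 2 + 1) * Real.cosh (2 * β) *
    (1 + Real.sqrt (1 - ((mFun β μ) ^ 2 - 1) ^ 2 /
      (((mFun β μ) ^ 2 + 1) ^ 2 * (Real.cosh (2 * β)) ^ 2)))

/-- `ψ(β) = inf {μ > 0 : λ(β,μ) < 1}`. -/
noncomputable def psiFun (β : ℝ) : ℝ :=
  sInf {μ : ℝ | 0 < μ ∧ lamFun β μ < 1}

/-- For every `β > 0` there exists `μ > 0` with `λ(β,μ) < 1`; hence the set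
`{μ > 0 : λ(β,μ) < 1}` is nonempty and `ψ(β) = inf {μ > 0 : λ(β,μ) < 1}` is a
(finite) nonnegative real number. -/
theorem psiFun_well_defined (β : ℝ) (hβ : 0 < β) :
    (∃ μ : ℝ, 0 < μ ∧ lamFun β μ < 1) ∧
    {μ : ℝ | 0 < μ ∧ lamFun β μ < 1}.Nonempty ∧
    0 ≤ psiFun β := by
  have key : ∃ μ : ℝ, 0 < μ ∧ lamFun β μ < 1 := by
    -- limits as μ → ∞
    have h0 : Filter.Tendsto (fun μ : ℝ => Real.exp (-μ)) Filter.atTop (nhds 0) :=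
      Real.tendsto_exp_neg_atTop_nhds_zero
    have h1 : Filter.Tendsto (fun μ : ℝ => Real.exp (β - μ)) Filter.atTop (nhds 0) := by
      have := h0.const_mul (Real.exp β)
      refine (this.congr (fun x => ?_)).mono_right (by simp)
      rw [← Real.exp_add]; ring_nf
    have h2 : Filter.Tendsto (fun μ : ℝ => Real.exp (-2 * μ)) Filter.atTop (nhds 0) := by
      have := h0.pow 2
      refine (this.congr (fun x => ?_)).mono_right (by simp)
      rw [← Real.exp_nat_mul]; ring_nf
    have h3 : Filter.Tendsto (fun μ : ℝ => Real.exp (-(β + μ))) Filter.atTop (nhds 0) := by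
      have := h0.const_mul (Real.exp (-β))
      refine (this.congr (fun x => ?_)).mono_right (by simp)
      rw [← Real.exp_add]; ring_nf
    have hden : Filter.Tendsto
        (fun μ : ℝ => Real.exp (2 * β) * (1 - Real.exp (β - μ)) ^ 2 - Real.exp (-2 * μ))
        Filter.atTop (nhds (Real.exp (2 * β))) := by
      have := ((Filter.Tendsto.const_mul (Real.exp (2 * β))
        ((((tendsto_const_nhds (x := (1:ℝ))).sub h1).pow 2))).sub h2)
      simpa using this
    have hc : Filter.Tendsto (fun μ : ℝ => cFun β μ) Filter.atTop (nhds 0) := by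
      have := h1.div hden (ne_of_gt (Real.exp_pos _))
      simpa [cFun, Pi.div_def] using this
    have hm : Filter.Tendsto (fun μ : ℝ => mFun β μ) Filter.atTop
        (nhds (Real.exp (2 * β))) := by
      have := (tendsto_const_nhds (x := Real.exp (2 * β))).add
        ((tendsto_const_nhds (x := (1 : ℝ) - Real.exp (4 * β))).mul h3)
      simpa [mFun] using this
    have hcosh : (0:ℝ) < Real.cosh (2 * β) := Real.cosh_pos _
    -- the bounding function tends to 0
    have hlim : Filter.Tendsto
        (fun μ : ℝ => 2 * (cFun β μ) ^ 2 * ((mFun β μ) ^ 2 + 1) * Real.cosh (2 * β))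
        Filter.atTop (nhds 0) := by
      have := (((tendsto_const_nhds (x := (2:ℝ))).mul (hc.pow 2)).mul
        ((hm.pow 2).add (tendsto_const_nhds (x := (1:ℝ))))).mul
        (tendsto_const_nhds (x := Real.cosh (2 * β)))
      simpa using this
    have hev : ∀ᶠ μ : ℝ in Filter.atTop,
        2 * (cFun β μ) ^ 2 * ((mFun β μ) ^ 2 + 1) * Real.cosh (2 * β) < 1 :=
      hlim.eventually_lt_const one_pos
    obtain ⟨μ, hμlt, hμpos⟩ := (hev.and (Filter.eventually_gt_atTop (0:ℝ))).exists
    refine ⟨μ, hμpos, lt_of_le_of_lt ?_ hμlt⟩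
    -- bound lamFun by 2 c² (m²+1) cosh
    have hA : (0:ℝ) ≤ (cFun β μ) ^ 2 * ((mFun β μ) ^ 2 + 1) * Real.cosh (2 * β) := by
      positivity
    have hx : (0:ℝ) ≤ ((mFun β μ) ^ 2 - 1) ^ 2 /
        (((mFun β μ) ^ 2 + 1) ^ 2 * (Real.cosh (2 * β)) ^ 2) := by positivity
    have hsq : Real.sqrt (1 - ((mFun β μ) ^ 2 - 1) ^ 2 /
        (((mFun β μ) ^ 2 + 1) ^ 2 * (Real.cosh (2 * β)) ^ 2)) ≤ 1 := by
      calc Real.sqrt _ ≤ Real.sqrt 1 := Real.sqrt_le_sqrt (by linarith)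
        _ = 1 := Real.sqrt_one
    calc lamFun β μ ≤ (cFun β μ) ^ 2 * ((mFun β μ) ^ 2 + 1) * Real.cosh (2 * β) * 2 := by
          unfold lamFun
          exact mul_le_mul_of_nonneg_left (by linarith) hA
      _ = 2 * (cFun β μ) ^ 2 * ((mFun β μ) ^ 2 + 1) * Real.cosh (2 * β) := by ring
  refine ⟨key, key, ?_⟩
  exact Real.sInf_nonneg (fun x hx => le_of_lt hx.1)
end
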